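/- arXiv:1902.09210 — 4 statements merged into one kernel-verified Lean document; each statement's English description precedes it below -/
import Mathlib

section
/- Let G* be the graph on vertex set {1,...,5} with edge set E* = {{1,2},{1,3},{1,4},{1,5},{2,3},{2,4},{3,5},{4,5}}. Define configurations p, q : {1,...,5} → ℝ² by p₁ = q₁ = (0,2), p₂ = (-1/4,1/2), p₃ = (21/20,9/10), p₄ = q₄ = (-1,0), p₅ = q₅ = (1,0), q₂ = (-21/20,9/10), q₃ = (1/4,1/2). Then for every edge {i,j} ∈ E*, |pᵢ - pⱼ| = |qᵢ - qⱼ|; i.e., the frameworks G*(p) and G*(q) are equivalent. -/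
noncomputable def pt (a b : ℝ) : EuclideanSpace ℝ (Fin 2) := WithLp.toLp 2 ![a, b]

/-- The edges of the graph G*: vertex `i : Fin 5` represents vertex `i+1` of
`{1,...,5}`, so these pairs are {1,2},{1,3},{1,4},{1,5},{2,3},{2,4},{3,5},{4,5}. -/
def Estar : Set (Fin 5 × Fin 5) :=
  {(0,1), (0,2), (0,3), (0,4), (1,2), (1,3), (2,4), (3,4)}

/-- Configuration p of G*. -/
noncomputable def pstar : Fin 5 → EuclideanSpace ℝ (Fin 2) :=
  ![pt 0 2, pt (-1/4) (1/2), pt (21/20) (9/10), pt (-1) 0, pt 1 0]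

/-- Configuration q of G*. -/
noncomputable def qstar : Fin 5 → EuclideanSpace ℝ (Fin 2) :=
  ![pt 0 2, pt (-21/20) (9/10), pt (1/4) (1/2), pt (-1) 0, pt 1 0]

lemma dist_pt (a b c d : ℝ) :
    dist (pt a b) (pt c d) = Real.sqrt ((a - c) ^ 2 + (b - d) ^ 2) := by
  simp [pt, EuclideanSpace.dist_eq, Fin.sum_univ_two, Real.dist_eq, sq_abs]

lemma dist_pt_eq_dist_pt {a b c d a' b' c' d' : ℝ}
    (h : (a - c) ^ 2 + (b - d) ^ 2 = (a' - c') ^ 2 + (b' - d') ^ 2) :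
    dist (pt a b) (pt c d) = dist (pt a' b') (pt c' d') := by
  rw [dist_pt, dist_pt, h]

/-- The frameworks G*(p) and G*(q) are equivalent: corresponding edge lengths agree. -/
theorem stmt_4 :
    ∀ e ∈ Estar, dist (pstar e.1) (pstar e.2) = dist (qstar e.1) (qstar e.2) := by
  rintro e (rfl | rfl | rfl | rfl | rfl | rfl | rfl | rfl) <;>
    exact dist_pt_eq_dist_pt (by norm_num)
end

section
/- Let G* be the graph on {1,...,5} with edges {{1,2},{1,3},{1,4},{1,5},{2,3},{2,4},{3,5},{4,5}}, let p be given by p₁=(0,2), p₂=(-1/4,1/2), p₃=(21/20,9/10), p₄=(-1,0), p₅=(1,0), and let A(x₁,x₂)=(x₁,x₂/2). Suppose q : {1,...,5} → ℝ² satisfies |qᵢ - qⱼ| = |Apᵢ - Apⱼ| for every edge {i,j}, and additionally q₁ = Ap₁, q₄ = Ap₄, q₅ = Ap₅. Then q₂ = Ap₂ and q₃ = Ap₃. -/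
/-- The affine map A(x₁,x₂) = (x₁, x₂/2). -/
noncomputable def Amap (x : EuclideanSpace ℝ (Fin 2)) : EuclideanSpace ℝ (Fin 2) :=
  WithLp.toLp 2 ![x 0, x 1 / 2]

/-!
The joint `q₂` lies on the circles about `A p₁` and `A p₄` through `A p₂`; two distinct circles in
the plane meet in at most two points, here `A p₂` and its mirror image in the line `A p₁ A p₄`.
Likewise `q₃` is `A p₃` or its mirror image in the line `A p₁ A p₅`. Of the four resulting
pairs, only `(A p₂, A p₃)` has squared distance `173/100`, as the edge `{2,3}` demands.
-/

open EuclideanGeometry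

lemma pt_inj {a b c d : ℝ} : pt a b = pt c d ↔ a = c ∧ b = d := by
  simp [pt, (WithLp.toLp_injective 2).eq_iff]

lemma dist_pt_pt_sq (a b c d : ℝ) : dist (pt a b) (pt c d) ^ 2 = (a - c) ^ 2 + (b - d) ^ 2 := by
  simp only [EuclideanSpace.dist_eq, pt, Fin.sum_univ_two, Real.dist_eq, sq_abs]
  exact Real.sq_sqrt (by positivity)

lemma dist_pt_pt_eq_dist_pt_pt_iff {a b c d a' b' c' d' : ℝ} :
    dist (pt a b) (pt c d) = dist (pt a' b') (pt c' d') ↔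
      (a - c) ^ 2 + (b - d) ^ 2 = (a' - c') ^ 2 + (b' - d') ^ 2 := by
  rw [← dist_pt_pt_sq, ← dist_pt_pt_sq, pow_left_inj₀ dist_nonneg dist_nonneg two_ne_zero]

lemma Amap_pstar (i : Fin 5) :
    Amap (pstar i) = ![pt 0 1, pt (-1/4) (1/4), pt (21/20) (9/20), pt (-1) 0, pt 1 0] i := by
  fin_cases i <;> simp [pstar, Amap, pt] <;> norm_num

-- `pt (-3/4) (3/4)` is the reflection of `A p₂` in the line `y = x + 1` through `A p₁`, `A p₄`.
lemma joint_two_eq_or_eq_mirror {x : EuclideanSpace ℝ (Fin 2)}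
    (h₁ : dist (pt 0 1) x = dist (pt 0 1) (pt (-1/4) (1/4)))
    (h₄ : dist x (pt (-1) 0) = dist (pt (-1/4) (1/4)) (pt (-1) 0)) :
    x = pt (-1/4) (1/4) ∨ x = pt (-3/4) (3/4) :=
  eq_of_dist_eq_of_dist_eq_of_finrank_eq_two finrank_euclideanSpace_fin (c₁ := pt 0 1)
    (by norm_num [pt_inj]) (by norm_num [pt_inj]) rfl
    (by rw [dist_pt_pt_eq_dist_pt_pt_iff]; norm_num) (by rw [dist_comm, h₁, dist_comm]) rfl
    (by rw [dist_pt_pt_eq_dist_pt_pt_iff]; norm_num) h₄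

-- `pt (11/20) (-1/20)` is the reflection of `A p₃` in the line `y = 1 - x` through `A p₁`, `A p₅`.
lemma joint_three_eq_or_eq_mirror {x : EuclideanSpace ℝ (Fin 2)}
    (h₁ : dist (pt 0 1) x = dist (pt 0 1) (pt (21/20) (9/20)))
    (h₅ : dist x (pt 1 0) = dist (pt (21/20) (9/20)) (pt 1 0)) :
    x = pt (21/20) (9/20) ∨ x = pt (11/20) (-1/20) :=
  eq_of_dist_eq_of_dist_eq_of_finrank_eq_two finrank_euclideanSpace_fin (c₁ := pt 0 1)
    (by norm_num [pt_inj]) (by norm_num [pt_inj]) rfl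
    (by rw [dist_pt_pt_eq_dist_pt_pt_iff]; norm_num) (by rw [dist_comm, h₁, dist_comm]) rfl
    (by rw [dist_pt_pt_eq_dist_pt_pt_iff]; norm_num) h₅

/-- If q is equivalent to G*(Ap) and agrees with Ap on the joints 1, 4, 5, then
q also agrees with Ap on the joints 2 and 3. -/
theorem stmt_11 (q : Fin 5 → EuclideanSpace ℝ (Fin 2))
    (he : ∀ e ∈ Estar, dist (q e.1) (q e.2) = dist (Amap (pstar e.1)) (Amap (pstar e.2)))
    (h1 : q 0 = Amap (pstar 0)) (h4 : q 3 = Amap (pstar 3)) (h5 : q 4 = Amap (pstar 4)) :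
    q 1 = Amap (pstar 1) ∧ q 2 = Amap (pstar 2) := by
  have e01 := he (0, 1) (by simp [Estar])
  have e02 := he (0, 2) (by simp [Estar])
  have e12 := he (1, 2) (by simp [Estar])
  have e13 := he (1, 3) (by simp [Estar])
  have e24 := he (2, 4) (by simp [Estar])
  rw [h1] at e01 e02; rw [h4] at e13; rw [h5] at e24
  simp only [Amap_pstar, Matrix.cons_val] at e01 e02 e12 e13 e24 ⊢
  rcases joint_two_eq_or_eq_mirror e01 e13 with hq₂ | hq₂ <;>
    rcases joint_three_eq_or_eq_mirror e02 e24 with hq₃ | hq₃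
  · exact ⟨hq₂, hq₃⟩
  all_goals rw [hq₂, hq₃, dist_pt_pt_eq_dist_pt_pt_iff] at e12; norm_num at e12
end

section
/- Let G* be the graph on {1,...,5} with edges {{1,2},{1,3},{1,4},{1,5},{2,3},{2,4},{3,5},{4,5}}, p the configuration p₁=(0,2), p₂=(-1/4,1/2), p₃=(21/20,9/10), p₄=(-1,0), p₅=(1,0), and A(x₁,x₂)=(x₁,x₂/2). Then the framework G*(Ap) is globally rigid in ℝ²: every configuration q : {1,...,5} → ℝ² with |qᵢ-qⱼ| = |Apᵢ-Apⱼ| for all edges {i,j} satisfies |qᵢ-qⱼ| = |Apᵢ-Apⱼ| for all i,j ∈ {1,...,5}. -/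
lemma dist_sq_eq_coords (a b : EuclideanSpace ℝ (Fin 2)) :
    dist a b ^ 2 = (a 0 - b 0) ^ 2 + (a 1 - b 1) ^ 2 := by
  rw [EuclideanSpace.dist_eq, Real.sq_sqrt (by positivity)]
  simp [Fin.sum_univ_two, Real.dist_eq, sq_abs]

lemma dist_Amap_pt_sq (a b c d : ℝ) :
    dist (Amap (pt a b)) (Amap (pt c d)) ^ 2 = (a - c) ^ 2 + ((b - d) / 2) ^ 2 := by
  rw [dist_sq_eq_coords]
  simp only [Amap, pt, Matrix.cons_val_zero, Matrix.cons_val_one, Matrix.cons_val_fin_one]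
  ring

/-- Half the Cayley–Menger determinant of points `a b c d`, in terms of
`u = |ab|², v = |ac|², w = |ad|², x = |bc|², y = |bd|², z = |cd|²`. -/
def cayleyMenger (u v w x y z : ℝ) : ℝ :=
  -(x*y*z) + w*x*z + w*x*y - w*x^2 - w^2*x + v*y*z - v*y^2 + v*x*y - v*w*z
    + v*w*y + v*w*x - v^2*y - u*z^2 + u*y*z + u*x*z + u*w*z - u*w*y + u*w*x
    + u*v*z + u*v*y - u*v*x - u^2*z

theorem cayleyMenger_dist_sq (a b c d : EuclideanSpace ℝ (Fin 2)) :
    cayleyMenger (dist a b ^ 2) (dist a c ^ 2) (dist a d ^ 2) (dist b c ^ 2) (dist b d ^ 2)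
      (dist c d ^ 2) = 0 := by
  simp only [dist_sq_eq_coords, cayleyMenger]
  ring

lemma forall_of_Estar {R : Fin 5 → Fin 5 → Prop} (hrefl : ∀ i, R i i)
    (hsymm : ∀ i j, R i j → R j i) (hE : ∀ e ∈ Estar, R e.1 e.2) (h14 : R 1 4) (h23 : R 2 3) :
    ∀ i j, R i j := by
  have h01 := hE (0, 1) (by simp [Estar])
  have h02 := hE (0, 2) (by simp [Estar])
  have h03 := hE (0, 3) (by simp [Estar])
  have h04 := hE (0, 4) (by simp [Estar])
  have h12 := hE (1, 2) (by simp [Estar])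
  have h13 := hE (1, 3) (by simp [Estar])
  have h24 := hE (2, 4) (by simp [Estar])
  have h34 := hE (3, 4) (by simp [Estar])
  intro i j
  fin_cases i <;> fin_cases j <;>
    first | exact hrefl _ | assumption | exact hsymm _ _ ‹_›

section
variable {q : Fin 5 → EuclideanSpace ℝ (Fin 2)}
  (h : ∀ e ∈ Estar, dist (q e.1) (q e.2) = dist (Amap (pstar e.1)) (Amap (pstar e.2)))
include h

lemma dist_one_four_eq : dist (q 1) (q 4) = dist (Amap (pstar 1)) (Amap (pstar 4)) := by
  rw [← sq_eq_sq₀ dist_nonneg dist_nonneg]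
  have h₁ := cayleyMenger_dist_sq (q 0) (q 1) (q 2) (q 4)
  have h₂ := cayleyMenger_dist_sq (q 0) (q 1) (q 3) (q 4)
  rw [h (0, 1) (by simp [Estar]), h (0, 2) (by simp [Estar]), h (0, 4) (by simp [Estar]),
    h (1, 2) (by simp [Estar]), h (2, 4) (by simp [Estar])] at h₁
  rw [h (0, 1) (by simp [Estar]), h (0, 3) (by simp [Estar]), h (0, 4) (by simp [Estar]),
    h (1, 3) (by simp [Estar]), h (3, 4) (by simp [Estar])] at h₂
  simp only [pstar, Matrix.cons_val, dist_Amap_pt_sq, cayleyMenger] at h₁ h₂ ⊢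
  linear_combination -25/24 * h₁ + 281/384 * h₂

lemma dist_two_three_eq : dist (q 2) (q 3) = dist (Amap (pstar 2)) (Amap (pstar 3)) := by
  rw [← sq_eq_sq₀ dist_nonneg dist_nonneg]
  have h₁ := cayleyMenger_dist_sq (q 0) (q 1) (q 2) (q 3)
  have h₂ := cayleyMenger_dist_sq (q 0) (q 2) (q 3) (q 4)
  rw [h (0, 1) (by simp [Estar]), h (0, 2) (by simp [Estar]), h (0, 3) (by simp [Estar]),
    h (1, 2) (by simp [Estar]), h (1, 3) (by simp [Estar])] at h₁
  rw [h (0, 2) (by simp [Estar]), h (0, 3) (by simp [Estar]), h (0, 4) (by simp [Estar]),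
    h (2, 4) (by simp [Estar]), h (3, 4) (by simp [Estar])] at h₂
  simp only [pstar, Matrix.cons_val, dist_Amap_pt_sq, cayleyMenger] at h₁ h₂ ⊢
  linear_combination -5/3 * h₁ + 25/48 * h₂

end

/-- The framework G*(Ap) is globally rigid in the plane: any configuration with the
same edge lengths has the same distances between all pairs of joints. -/
theorem stmt_13 (q : Fin 5 → EuclideanSpace ℝ (Fin 2))
    (he : ∀ e ∈ Estar, dist (q e.1) (q e.2) = dist (Amap (pstar e.1)) (Amap (pstar e.2))) :
    ∀ i j : Fin 5, dist (q i) (q j) = dist (Amap (pstar i)) (Amap (pstar j)) :=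
  forall_of_Estar (fun _ => by simp only [dist_self])
    (fun _ _ hij => by rwa [dist_comm, dist_comm (Amap _)]) he (dist_one_four_eq he)
    (dist_two_three_eq he)
end

section
/- There exists a finite graph G, a configuration p of G in ℝ², and an affine bijection A : ℝ² → ℝ² such that the framework G(p) is not globally rigid in ℝ² while G(A∘p) is globally rigid in ℝ². -/
/-!
Take the wheel with hub `0` and rim `1 2 3 4`, and put the hub at the origin. Spoke and rim
lengths fix every Gram entry `⟪p i, p j⟫` except the two diagonals `⟪p 1, p 3⟫`, `⟪p 2, p 4⟫`.
Since three vectors in the plane have vanishing Gram determinant, the vectors `p 1, p 2, p 3`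
allow exactly one other value of `⟪p 1, p 3⟫` (reflect `p 3` in the line of `p 2`), and so do
the vectors `p 1, p 4, p 3`. The framework is globally rigid as soon as these two alternative
values differ for both diagonals, an open condition that an affine map can create or destroy:
`flexConfig` is a configuration where the alternatives coincide, and the shear
`(x, y) ↦ (x, x + y)` maps it to one where they do not.
-/

/-- A framework `(E, p)` on vertex set `V` is globally rigid in ℝ² iff every
configuration with the same edge lengths has the same distances between all pairs. -/
def GloballyRigid {V : Type*} (E : Set (V × V)) (p : V → EuclideanSpace ℝ (Fin 2)) : Prop :=
  ∀ q : V → EuclideanSpace ℝ (Fin 2),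
    (∀ e ∈ E, dist (p e.1) (p e.2) = dist (q e.1) (q e.2)) →
    ∀ i j : V, dist (p i) (p j) = dist (q i) (q j)

open Module Matrix
open scoped RealInnerProductSpace

theorem Matrix.det_gram_eq_zero_of_finrank_lt {𝕜 E n : Type*} [RCLike 𝕜]
    [SeminormedAddCommGroup E] [InnerProductSpace 𝕜 E] [Module.Finite 𝕜 E]
    [Fintype n] [DecidableEq n] (hn : finrank 𝕜 E < Fintype.card n) (v : n → E) :
    (gram 𝕜 v).det = 0 := by
  by_contra h
  exact hn.not_ge (linearIndependent_of_det_gram_ne_zero h).fintype_card_le_finrank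

section FinrankTwo

variable {E : Type*} [NormedAddCommGroup E] [InnerProductSpace ℝ E] [FiniteDimensional ℝ E]

theorem inner_eq_or_of_finrank_le_two (hE : finrank ℝ E ≤ 2) {a b c a' b' c' : E}
    (haa : ⟪a, a⟫ = ⟪a', a'⟫) (hbb : ⟪b, b⟫ = ⟪b', b'⟫) (hcc : ⟪c, c⟫ = ⟪c', c'⟫)
    (hab : ⟪a, b⟫ = ⟪a', b'⟫) (hbc : ⟪b, c⟫ = ⟪b', c'⟫) :
    ⟪a, c⟫ = ⟪a', c'⟫ ∨ ⟪b, b⟫ * (⟪a, c⟫ + ⟪a', c'⟫) = 2 * ⟪a, b⟫ * ⟪b, c⟫ := by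
  have hdet (x y z : E) : (gram ℝ ![x, y, z]).det = 0 :=
    det_gram_eq_zero_of_finrank_lt (by simpa using hE.trans_lt (by norm_num)) _
  have h := hdet a b c
  have h' := hdet a' b' c'
  simp only [det_fin_three, gram_apply, cons_val_zero, cons_val_one, cons_val_two,
    Nat.succ_eq_add_one, Nat.reduceAdd, tail_cons, head_cons] at h h'
  rw [real_inner_comm a b, real_inner_comm a c, real_inner_comm b c, haa, hbb, hcc, hab, hbc] at h
  rw [real_inner_comm a' b', real_inner_comm a' c', real_inner_comm b' c'] at h'
  -- the Gram determinant is a quadratic in `⟪a, c⟫` with these two roots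
  have hroots :
      (⟪a, c⟫ - ⟪a', c'⟫) * (⟪b, b⟫ * (⟪a, c⟫ + ⟪a', c'⟫) - 2 * ⟪a, b⟫ * ⟪b, c⟫) = 0 := by
    rw [hbb, hab, hbc]
    linear_combination h' - h
  exact (mul_eq_zero.1 hroots).imp sub_eq_zero.1 sub_eq_zero.1

theorem inner_diagonal_eq_of_finrank_le_two (hE : finrank ℝ E ≤ 2) {a b c d a' b' c' d' : E}
    (haa : ⟪a, a⟫ = ⟪a', a'⟫) (hbb : ⟪b, b⟫ = ⟪b', b'⟫) (hcc : ⟪c, c⟫ = ⟪c', c'⟫)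
    (hdd : ⟪d, d⟫ = ⟪d', d'⟫) (hab : ⟪a, b⟫ = ⟪a', b'⟫) (hbc : ⟪b, c⟫ = ⟪b', c'⟫)
    (hcd : ⟪c, d⟫ = ⟪c', d'⟫) (hda : ⟪d, a⟫ = ⟪d', a'⟫)
    (hflip : ⟪a, b⟫ * ⟪b, c⟫ * ⟪d, d⟫ ≠ ⟪c, d⟫ * ⟪d, a⟫ * ⟪b, b⟫) :
    ⟪a, c⟫ = ⟪a', c'⟫ := by
  have had : ⟪a, d⟫ = ⟪a', d'⟫ := by rw [real_inner_comm, hda, real_inner_comm]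
  have hdc : ⟪d, c⟫ = ⟪d', c'⟫ := by rw [real_inner_comm, hcd, real_inner_comm]
  obtain h | hb := inner_eq_or_of_finrank_le_two hE haa hbb hcc hab hbc
  · exact h
  obtain h | hd := inner_eq_or_of_finrank_le_two hE haa hdd hcc had hdc
  · exact h
  refine absurd ?_ hflip
  rw [real_inner_comm d a, real_inner_comm c d] at hd
  linear_combination (⟪b, b⟫ * hd - ⟪d, d⟫ * hb) / 2

end FinrankTwo

theorem real_inner_sub_sub_eq_iff_dist_eq {F : Type*} [NormedAddCommGroup F]
    [InnerProductSpace ℝ F] {o a b o' a' b' : F} (ha : dist o a = dist o' a')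
    (hb : dist o b = dist o' b') :
    ⟪a - o, b - o⟫ = ⟪a' - o', b' - o'⟫ ↔ dist a b = dist a' b' := by
  simp only [real_inner_eq_norm_mul_self_add_norm_mul_self_sub_norm_sub_mul_self_div_two,
    sub_sub_sub_cancel_right, ← dist_eq_norm, dist_comm _ o, dist_comm _ o', ha, hb]
  exact ⟨fun h ↦ (mul_self_inj dist_nonneg dist_nonneg).1 (by linarith), fun h ↦ by rw [h]⟩

def wheel4 : Set (Fin 5 × Fin 5) :=
  {(0, 1), (0, 2), (0, 3), (0, 4), (1, 2), (2, 3), (3, 4), (4, 1)}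

theorem globallyRigid_wheel4 (p : Fin 5 → EuclideanSpace ℝ (Fin 2))
    (h13 : ⟪p 1 - p 0, p 2 - p 0⟫ * ⟪p 2 - p 0, p 3 - p 0⟫ * ⟪p 4 - p 0, p 4 - p 0⟫ ≠
      ⟪p 3 - p 0, p 4 - p 0⟫ * ⟪p 4 - p 0, p 1 - p 0⟫ * ⟪p 2 - p 0, p 2 - p 0⟫)
    (h24 : ⟪p 2 - p 0, p 3 - p 0⟫ * ⟪p 3 - p 0, p 4 - p 0⟫ * ⟪p 1 - p 0, p 1 - p 0⟫ ≠
      ⟪p 4 - p 0, p 1 - p 0⟫ * ⟪p 1 - p 0, p 2 - p 0⟫ * ⟪p 3 - p 0, p 3 - p 0⟫) :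
    GloballyRigid wheel4 p := by
  intro q hq
  have hspoke (i : Fin 5) : dist (p 0) (p i) = dist (q 0) (q i) := by
    fin_cases i
    · simp
    all_goals exact hq (0, _) (by simp [wheel4])
  have hgram_iff (i j : Fin 5) :=
    real_inner_sub_sub_eq_iff_dist_eq (hspoke i) (hspoke j)
  have hself (i : Fin 5) : ⟪p i - p 0, p i - p 0⟫ = ⟪q i - q 0, q i - q 0⟫ :=
    (hgram_iff i i).2 (by simp)
  have hrim (e) (he : e ∈ wheel4) :
      ⟪p e.1 - p 0, p e.2 - p 0⟫ = ⟪q e.1 - q 0, q e.2 - q 0⟫ :=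
    (hgram_iff e.1 e.2).2 (hq e he)
  have hplane : finrank ℝ (EuclideanSpace ℝ (Fin 2)) ≤ 2 := by simp
  have hdiag13 := inner_diagonal_eq_of_finrank_le_two hplane (hself 1) (hself 2) (hself 3)
    (hself 4) (hrim (1, 2) (by simp [wheel4])) (hrim (2, 3) (by simp [wheel4]))
    (hrim (3, 4) (by simp [wheel4])) (hrim (4, 1) (by simp [wheel4])) h13
  have hdiag24 := inner_diagonal_eq_of_finrank_le_two hplane (hself 2) (hself 3) (hself 4)
    (hself 1) (hrim (2, 3) (by simp [wheel4])) (hrim (3, 4) (by simp [wheel4]))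
    (hrim (4, 1) (by simp [wheel4])) (hrim (1, 2) (by simp [wheel4])) h24
  have hsymm {i j : Fin 5} (h : ⟪p i - p 0, p j - p 0⟫ = ⟪q i - q 0, q j - q 0⟫) :
      ⟪p j - p 0, p i - p 0⟫ = ⟪q j - q 0, q i - q 0⟫ := by
    rwa [real_inner_comm, real_inner_comm (q i - q 0)]
  intro i j
  refine (hgram_iff i j).1 ?_
  fin_cases i <;> fin_cases j <;> first
    | exact hself _
    | (apply hrim (_, _); simp [wheel4]; done)
    | (apply hsymm; apply hrim (_, _); simp [wheel4]; done)
    | exact hdiag13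
    | exact hsymm hdiag13
    | exact hdiag24
    | exact hsymm hdiag24

noncomputable def flexConfig : Fin 5 → EuclideanSpace ℝ (Fin 2) :=
  ![!₂[0, 0], !₂[1, 0], !₂[3, 4], !₂[-33, 56], !₂[-5, -12]]

/-- Fixes `0, 1, 4` and reflects `flexConfig 2` in the line `01` and `flexConfig 3` in the
line `04`; the rim edge `23` keeps its length because of the coincidence in `flexConfig`. -/
noncomputable def flexConfig' : Fin 5 → EuclideanSpace ℝ (Fin 2) :=
  ![!₂[0, 0], !₂[1, 0], !₂[3, -4], !₂[63, 16], !₂[-5, -12]]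

noncomputable def rigidConfig : Fin 5 → EuclideanSpace ℝ (Fin 2) :=
  ![!₂[0, 0], !₂[1, 1], !₂[3, 7], !₂[-33, 23], !₂[-5, -17]]

theorem not_globallyRigid_flexConfig : ¬ GloballyRigid wheel4 flexConfig := by
  intro h
  refine absurd (h flexConfig' ?_ 1 3) ?_
  · intro e he
    simp only [wheel4, Set.mem_insert_iff, Set.mem_singleton_iff] at he
    rcases he with rfl | rfl | rfl | rfl | rfl | rfl | rfl | rfl <;>
      simp [flexConfig, flexConfig', EuclideanSpace.dist_eq, Fin.sum_univ_two, Real.dist_eq] <;>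
      norm_num
  · simp [flexConfig, flexConfig', EuclideanSpace.dist_eq, Fin.sum_univ_two, Real.dist_eq]
    norm_num

theorem globallyRigid_rigidConfig : GloballyRigid wheel4 rigidConfig := by
  apply globallyRigid_wheel4 <;>
  · simp [rigidConfig, PiLp.inner_apply, Fin.sum_univ_two, EuclideanSpace.norm_eq]
    norm_num

noncomputable def shear : EuclideanSpace ℝ (Fin 2) ≃ₗ[ℝ] EuclideanSpace ℝ (Fin 2) where
  toFun v := !₂[v 0, v 0 + v 1]
  invFun v := !₂[v 0, v 1 - v 0]
  map_add' u v := by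
    ext k; fin_cases k <;> simp; ring
  map_smul' c v := by
    ext k; fin_cases k <;> simp; ring
  left_inv v := by ext k; fin_cases k <;> simp
  right_inv v := by ext k; fin_cases k <;> simp

theorem shear_comp_flexConfig : ⇑shear ∘ flexConfig = rigidConfig := by
  funext i
  fin_cases i <;> ext k <;> fin_cases k <;> simp [shear, flexConfig, rigidConfig] <;> norm_num

/-- Global rigidity in the plane is not affine-invariant: there is a framework that is
not globally rigid whose image under some affine bijection is globally rigid. -/
theorem stmt_14 :
    ∃ (V : Type) (_ : Finite V) (E : Set (V × V)) (p : V → EuclideanSpace ℝ (Fin 2))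
      (A : EuclideanSpace ℝ (Fin 2) ≃ᵃ[ℝ] EuclideanSpace ℝ (Fin 2)),
      ¬ GloballyRigid E p ∧ GloballyRigid E (A ∘ p) := by
  refine ⟨Fin 5, inferInstance, wheel4, flexConfig, shear.toAffineEquiv,
    not_globallyRigid_flexConfig, ?_⟩
  have hA : ⇑shear.toAffineEquiv ∘ flexConfig = rigidConfig := shear_comp_flexConfig
  rw [hA]
  exact globallyRigid_rigidConfig
end
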